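/- arXiv:1712.05707 — 2 statements merged into one kernel-verified Lean document; each statement's English description precedes it below -/
import Mathlib

section
/- For n ≥ 2, if (s₁,…,s_{n-1},p) ∈ Γₙ and |p| < 1, then the tuple Q = ((s₁ − conj(s_{n-1})p)/(1−|p|²), (s₂ − conj(s_{n-2})p)/(1−|p|²), …, (s_{n-1} − conj(s₁)p)/(1−|p|²)) belongs to Γ_{n-1}. -/
/-!
Write `x = πₙ(z)` with `|zⱼ| ≤ 1` and `p = z₁ ⋯ zₙ`. The polynomial
`N = ∏ (X - zⱼ) - p ∏ (z̄ⱼ X - 1)` (`schurPoly`) has `k`-th coefficient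
`±(e_{n-k} - p · conj e_k)`; in particular it vanishes at `0`, so `N = X h` where `h` has degree
`n - 1`, leading coefficient `1 - |p|²`, and, by Vieta, elementary symmetric functions of its
roots equal to the entries of `Q`. Every root `w` of `N` lies in the closed disc: if `|w| > 1`
then `|z̄ⱼ w - 1| ≤ |w - zⱼ|` for each `j`, since `|w - t|² - |1 - t̄ w|² = (|w|² - 1)(1 - |t|²)`,
which is incompatible with `|∏ (w - zⱼ)| = |p| |∏ (z̄ⱼ w - 1)|` and `|p| < 1`.
-/

open Finset

/-- The `k`-th elementary symmetric polynomial of `z₁, …, zₙ`. -/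
noncomputable def esymC (n k : ℕ) (z : Fin n → ℂ) : ℂ :=
  ∑ t ∈ Finset.powersetCard k (Finset.univ : Finset (Fin n)), ∏ j ∈ t, z j

/-- The symmetrization map `πₙ(z) = (e₁(z), …, eₙ(z))`. -/
noncomputable def symMap (n : ℕ) (z : Fin n → ℂ) : Fin n → ℂ :=
  fun k => esymC n (k.1 + 1) z

/-- The closed symmetrized polydisc `Γₙ`. -/
noncomputable def closedSymPolydisc (n : ℕ) : Set (Fin n → ℂ) :=
  {x | ∃ z : Fin n → ℂ, (∀ j, ‖z j‖ ≤ 1) ∧ symMap n z = x}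

open Polynomial ComplexConjugate

namespace Multiset

section CommSemiring

variable {R : Type*} [CommSemiring R]

@[simp]
theorem esymm_zero (s : Multiset R) : s.esymm 0 = 1 := by
  simp [esymm]

theorem esymm_eq_zero_of_card_lt {s : Multiset R} {k : ℕ} (h : card s < k) : s.esymm k = 0 := by
  simp [esymm, powersetCard_eq_empty k h]

theorem esymm_cons_succ (a : R) (s : Multiset R) (k : ℕ) :
    (a ::ₘ s).esymm (k + 1) = s.esymm (k + 1) + a * s.esymm k := by
  simp only [esymm, powersetCard_cons, map_add, sum_add, map_map, Function.comp_def, prod_cons,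
    sum_map_mul_left]

theorem esymm_map_ringHom {S : Type*} [CommSemiring S] (g : R →+* S) (s : Multiset R) (k : ℕ) :
    (s.map g).esymm k = g (s.esymm k) := by
  simp only [esymm, powersetCard_map, map_map, map_multiset_sum, Function.comp_def,
    map_multiset_prod]

end CommSemiring

theorem prod_C_mul_X_sub_one_coeff {R : Type*} [CommRing R] (s : Multiset R) (k : ℕ) :
    (s.map fun a => C a * X - 1).prod.coeff k = (-1) ^ (card s + k) * s.esymm k := by
  induction s using Multiset.induction generalizing k with
  | empty =>
    cases k with
    | zero => simp
    | succ k => simp [coeff_one, esymm_eq_zero_of_card_lt (s := (0 : Multiset R)) k.succ_pos]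
  | cons a s ih =>
    cases k with
    | zero => simp [ih, pow_succ]
    | succ k =>
      simp only [map_cons, prod_cons, sub_mul, one_mul, coeff_sub, mul_assoc, coeff_C_mul,
        coeff_X_mul, ih, esymm_cons_succ, card_cons]
      ring

end Multiset

theorem Complex.norm_one_sub_conj_mul_le_norm_sub {w t : ℂ} (hw : 1 ≤ ‖w‖) (ht : ‖t‖ ≤ 1) :
    ‖1 - conj t * w‖ ≤ ‖w - t‖ := by
  have key : ‖w - t‖ ^ 2 - ‖1 - conj t * w‖ ^ 2 = (‖w‖ ^ 2 - 1) * (1 - ‖t‖ ^ 2) := by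
    simp only [Complex.sq_norm, Complex.normSq_apply, Complex.sub_re, Complex.sub_im,
      Complex.mul_re, Complex.mul_im, Complex.conj_re, Complex.conj_im, Complex.one_re,
      Complex.one_im]
    ring
  have : 0 ≤ (‖w‖ ^ 2 - 1) * (1 - ‖t‖ ^ 2) :=
    mul_nonneg (by nlinarith) (by nlinarith [norm_nonneg t])
  exact (pow_le_pow_iff_left₀ (norm_nonneg _) (norm_nonneg _) two_ne_zero).1 (by linarith)

theorem norm_le_one_of_prod_sub_eq_mul_prod {S : Multiset ℂ} (hS : ∀ s ∈ S, ‖s‖ ≤ 1) {c w : ℂ}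
    (hc : ‖c‖ < 1)
    (h : (S.map (w - ·)).prod = c * (S.map fun s => conj s * w - 1).prod) : ‖w‖ ≤ 1 := by
  by_contra! hw
  have hF : (S.map (w - ·)).prod ≠ 0 := by
    rw [Ne, Multiset.prod_eq_zero_iff, Multiset.mem_map]
    rintro ⟨s, hs, hws⟩
    exact (hS s hs).not_gt (sub_eq_zero.1 hws ▸ hw)
  have hle : ‖(S.map fun s => conj s * w - 1).prod‖ ≤ ‖(S.map (w - ·)).prod‖ := by
    simp only [← normHom_apply, map_multiset_prod, Multiset.map_map, Function.comp_def]
    refine Multiset.prod_map_le_prod_map₀ _ _ (fun s _ => norm_nonneg (conj s * w - 1))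
      fun s hs => ?_
    rw [normHom_apply, normHom_apply, ← norm_neg, neg_sub]
    exact Complex.norm_one_sub_conj_mul_le_norm_sub hw.le (hS s hs)
  have := norm_pos_iff.2 hF
  rw [h, norm_mul] at hle this
  nlinarith [norm_nonneg c]

noncomputable def schurPoly (S : Multiset ℂ) (c : ℂ) : ℂ[X] :=
  (S.map fun s => X - C s).prod - C c * ((S.map conj).map fun a => C a * X - 1).prod

namespace schurPoly

variable (S : Multiset ℂ) (c : ℂ)

theorem coeff_of_le {k : ℕ} (hk : k ≤ Multiset.card S) :
    (schurPoly S c).coeff k =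
      (-1) ^ (Multiset.card S - k) * (S.esymm (Multiset.card S - k) - c * conj (S.esymm k)) := by
  rw [schurPoly, coeff_sub, coeff_C_mul, Multiset.prod_X_sub_C_coeff S hk,
    Multiset.prod_C_mul_X_sub_one_coeff, Multiset.card_map, Multiset.esymm_map_ringHom]
  have hsign : (-1 : ℂ) ^ (Multiset.card S + k) = (-1) ^ (Multiset.card S - k) := by
    obtain ⟨j, hj⟩ := Nat.exists_eq_add_of_le hk
    rw [hj, Nat.add_sub_cancel_left, add_right_comm, ← two_mul, pow_add, pow_mul, neg_one_sq,
      one_pow, one_mul]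
  rw [hsign]
  ring

theorem natDegree_le : (schurPoly S c).natDegree ≤ Multiset.card S := by
  refine natDegree_le_iff_coeff_eq_zero.2 fun k hk => ?_
  rw [schurPoly, coeff_sub, coeff_C_mul, Multiset.prod_C_mul_X_sub_one_coeff,
    Multiset.esymm_eq_zero_of_card_lt (by simpa using hk),
    coeff_eq_zero_of_natDegree_lt (by rwa [natDegree_multiset_prod_X_sub_C_eq_card])]
  simp

theorem isRoot_iff {w : ℂ} :
    (schurPoly S c).IsRoot w ↔
      (S.map (w - ·)).prod = c * (S.map fun s => conj s * w - 1).prod := by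
  simp [schurPoly, eval_multiset_prod, Multiset.map_map, sub_eq_zero]

end schurPoly

theorem Multiset.exists_esymm_eq_div_of_norm_le_one (S : Multiset ℂ) {m : ℕ}
    (hcard : Multiset.card S = m + 1) (hS : ∀ s ∈ S, ‖s‖ ≤ 1) (hp : ‖S.esymm (m + 1)‖ < 1) :
    ∃ R : Multiset ℂ, Multiset.card R = m ∧ (∀ r ∈ R, ‖r‖ ≤ 1) ∧ ∀ j ≤ m,
      R.esymm j = (S.esymm j - conj (S.esymm (m + 1 - j)) * S.esymm (m + 1)) /
        (1 - (‖S.esymm (m + 1)‖ : ℂ) ^ 2) := by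
  set p := S.esymm (m + 1)
  have hD : 1 - (‖p‖ : ℂ) ^ 2 ≠ 0 := by
    norm_cast
    nlinarith [norm_nonneg p]
  have hN0 : (schurPoly S p).coeff 0 = 0 := by
    rw [schurPoly.coeff_of_le S p (Nat.zero_le _), hcard]
    simp [p]
  have hcoeff : ∀ k ≤ m, (schurPoly S p).divX.coeff k =
      (-1) ^ (m - k) * (S.esymm (m - k) - conj (S.esymm (k + 1)) * p) := by
    intro k hk
    rw [coeff_divX, schurPoly.coeff_of_le S p (by omega), hcard, Nat.add_sub_add_right, mul_comm p]
  have hlead : (schurPoly S p).divX.coeff m = 1 - (‖p‖ : ℂ) ^ 2 := by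
    rw [hcoeff m le_rfl, Nat.sub_self, ← Complex.mul_conj', mul_comm p]
    simp [p]
  have hdeg : (schurPoly S p).divX.natDegree = m := by
    refine natDegree_eq_of_le_of_coeff_ne_zero ?_ (hlead ▸ hD)
    rw [natDegree_divX_eq_natDegree_tsub_one]
    have := schurPoly.natDegree_le S p
    omega
  have hroots : Multiset.card (schurPoly S p).divX.roots = (schurPoly S p).divX.natDegree :=
    splits_iff_card_roots.1 (IsAlgClosed.splits _)
  refine ⟨(schurPoly S p).divX.roots, hroots.trans hdeg, fun w hw => ?_, fun j hj => ?_⟩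
  · refine norm_le_one_of_prod_sub_eq_mul_prod hS hp ((schurPoly.isRoot_iff S p).1 ?_)
    rw [IsRoot, ← divX_mul_X_add (schurPoly S p), hN0, eval_add, eval_mul,
      (mem_roots'.1 hw).2.eq_zero]
    simp
  · have hvieta := coeff_eq_esymm_roots_of_card hroots (k := m - j) (by omega)
    rw [hdeg, leadingCoeff, hdeg, hlead, hcoeff _ (by omega), Nat.sub_sub_self hj,
      show m - j + 1 = m + 1 - j by omega] at hvieta
    rw [eq_div_iff hD]
    apply mul_left_cancel₀ (pow_ne_zero j (neg_ne_zero.2 one_ne_zero))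
    rw [hvieta]
    ring

theorem mem_closedSymPolydisc_iff {n : ℕ} {x : Fin n → ℂ} :
    x ∈ closedSymPolydisc n ↔ ∃ S : Multiset ℂ, Multiset.card S = n ∧ (∀ s ∈ S, ‖s‖ ≤ 1) ∧
      ∀ k : Fin n, S.esymm (k + 1) = x k := by
  constructor
  · rintro ⟨z, hz, rfl⟩
    exact ⟨univ.val.map z, by simp, by simpa using hz, fun k => Finset.esymm_map_val z univ _⟩
  · rintro ⟨S, hcard, hS, hx⟩
    obtain ⟨l, rfl⟩ := Quot.exists_rep S
    change l.length = n at hcard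
    subst hcard
    refine ⟨l.get, fun j => hS _ (List.get_mem l j), funext fun k => ?_⟩
    rw [← hx k, symMap, esymC, ← Finset.esymm_map_val, Fin.univ_val_map, List.ofFn_get]
    rfl

/-- Here `x i.castSucc = s_{i+1}`, `x i.rev.castSucc = s_{n-i}` and `x (Fin.last m) = p`. -/
theorem Q_mem_closedSymPolydisc_general (m : ℕ)
    (x : Fin (m + 1) → ℂ) (hx : x ∈ closedSymPolydisc (m + 1))
    (hp : ‖x (Fin.last m)‖ < 1) :
    (fun i : Fin m =>
        (x i.castSucc - (starRingEnd ℂ) (x i.rev.castSucc) * x (Fin.last m)) /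
          (1 - (‖x (Fin.last m)‖ : ℂ) ^ 2)) ∈ closedSymPolydisc m := by
  obtain ⟨S, hcard, hS, hSx⟩ := mem_closedSymPolydisc_iff.1 hx
  have hlast : S.esymm (m + 1) = x (Fin.last m) := hSx (Fin.last m)
  obtain ⟨R, hRcard, hR, hResymm⟩ :=
    S.exists_esymm_eq_div_of_norm_le_one hcard hS (hlast ▸ hp)
  refine mem_closedSymPolydisc_iff.2 ⟨R, hRcard, hR, fun i => ?_⟩
  have hrev : m + 1 - (i + 1) = i.rev.castSucc + 1 := by
    simp only [Fin.val_castSucc, Fin.val_rev]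
    omega
  rw [hResymm (i + 1) i.isLt, hrev, hSx, hlast, ← hSx i.castSucc]
  rfl

/-- For `n = m + 1 ≥ 2`, if `(s₁, …, s_{n-1}, p) ∈ Γₙ` (here
`x i.castSucc = s_{i+1}` for `i : Fin m` and `x (Fin.last m) = p`) and
`|p| < 1`, then the tuple `Q` with `Qᵢ = (sᵢ - conj(s_{n-i}) p) / (1 - |p|²)`
lies in `Γ_{n-1}` (note `x i.rev.castSucc = s_{n-i}` when
`x i.castSucc = s_{i+1}`). -/
theorem Q_mem_closedSymPolydisc (m : ℕ) (hm : 1 ≤ m)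
    (x : Fin (m + 1) → ℂ) (hx : x ∈ closedSymPolydisc (m + 1))
    (hp : ‖x (Fin.last m)‖ < 1) :
    (fun i : Fin m =>
        (x i.castSucc - (starRingEnd ℂ) (x i.rev.castSucc) * x (Fin.last m)) /
          (1 - (‖x (Fin.last m)‖ : ℂ) ^ 2)) ∈ closedSymPolydisc m :=
  Q_mem_closedSymPolydisc_general m x hx hp
end

section
/- For n ≥ 2 and (s₁,…,s_{n-1},p) ∈ ℂⁿ, the point (s₁,…,s_{n-1},p) belongs to πₙ(𝕋ⁿ) if and only if |p| = 1 and there exists (c₁,…,c_{n-1}) ∈ π_{n-1}(𝕋^{n-1}) such that sᵢ = cᵢ + conj(c_{n-i})·p for every i = 1,…,n-1. -/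
open Finset

/-- The symmetrization of the `n`-torus, `πₙ(𝕋ⁿ)` (the distinguished boundary
`bΓₙ`). -/
noncomputable def symTorus (n : ℕ) : Set (Fin n → ℂ) :=
  {x | ∃ z : Fin n → ℂ, (∀ j, ‖z j‖ = 1) ∧ symMap n z = x}

/-! Write `z = (w, ζ)` with `w ∈ 𝕋ⁿ⁻¹`, `ζ ∈ 𝕋`, and `c = πₙ₋₁(w)`. The recursion
`e_{i+1}(z) = e_{i+1}(w) + ζ eᵢ(w)` together with the symmetry `conj(e_{n-1-i}(w)) ∏ w = eᵢ(w)`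
of unimodular points (complement of index sets) gives `sᵢ = cᵢ + conj(c_{n-i}) p` with
`p = ζ ∏ w`. Conversely, given `c = πₙ₋₁(w)` and `|p| = 1`, the point `ζ = p · conj(∏ w)` is
unimodular and `(w, ζ)` maps to `(s, p)`. -/

theorem Multiset.esymm_cons_succ_s10 {R : Type*} [CommSemiring R] (a : R) (s : Multiset R) (k : ℕ) :
    (a ::ₘ s).esymm (k + 1) = s.esymm (k + 1) + a * s.esymm k := by
  simp only [Multiset.esymm, Multiset.powersetCard_cons, Multiset.map_add, Multiset.sum_add,
    Multiset.map_map, Function.comp_def, Multiset.prod_cons, Multiset.sum_map_mul_left]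

lemma esymC_eq_esymm (n k : ℕ) (z : Fin n → ℂ) :
    esymC n k z = (univ.val.map z).esymm k :=
  (Finset.esymm_map_val z univ k).symm

lemma esymC_succ_succ (m k : ℕ) (z : Fin (m + 1) → ℂ) :
    esymC (m + 1) (k + 1) z =
      esymC m (k + 1) (Fin.init z) + z (Fin.last m) * esymC m k (Fin.init z) := by
  have hsplit : univ.val.map z = z (Fin.last m) ::ₘ univ.val.map (Fin.init z) := by
    rw [Fin.univ_castSuccEmb, Finset.cons_val, Multiset.map_cons, Finset.map_val,
      Multiset.map_map]
    rfl
  rw [esymC_eq_esymm, esymC_eq_esymm, esymC_eq_esymm, hsplit, Multiset.esymm_cons_succ_s10]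

lemma esymC_self (m : ℕ) (z : Fin m → ℂ) : esymC m m z = ∏ j, z j := by
  have huniv : powersetCard m (univ : Finset (Fin m)) = {univ} := by
    simpa using powersetCard_self (univ : Finset (Fin m))
  rw [esymC, huniv, sum_singleton]

lemma conj_esymC_mul_prod {m k : ℕ} (hk : k ≤ m) {w : Fin m → ℂ} (hw : ∀ j, ‖w j‖ = 1) :
    starRingEnd ℂ (esymC m k w) * ∏ j, w j = esymC m (m - k) w := by
  have hconj (j : Fin m) : starRingEnd ℂ (w j) * w j = 1 := by
    rw [Complex.conj_mul', hw j]; norm_num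
  rw [esymC, esymC, map_sum, Finset.sum_mul]
  refine Finset.sum_nbij' (·ᶜ) (·ᶜ) ?_ ?_ (fun t _ => compl_compl t) (fun t _ => compl_compl t) ?_
  · intro t ht
    simp_all [Finset.card_compl]
  · intro t ht
    simp_all [Finset.card_compl, Nat.sub_sub_self hk]
  · intro t _
    rw [← Finset.prod_mul_prod_compl t w, map_prod, ← mul_assoc, ← Finset.prod_mul_distrib]
    simp [hconj]

lemma symMap_succ_last (m : ℕ) (z : Fin (m + 1) → ℂ) :
    symMap (m + 1) z (Fin.last m) = ∏ j, z j :=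
  esymC_self (m + 1) z

lemma symMap_succ_castSucc {m : ℕ} {z : Fin (m + 1) → ℂ} (hw : ∀ j, ‖Fin.init z j‖ = 1)
    (i : Fin m) :
    symMap (m + 1) z i.castSucc = symMap m (Fin.init z) i +
      starRingEnd ℂ (symMap m (Fin.init z) i.rev) * symMap (m + 1) z (Fin.last m) := by
  have hrev : i.rev.1 + 1 = m - i.1 := by simp only [Fin.val_rev]; omega
  have hsym := conj_esymC_mul_prod (Nat.sub_le m i.1) hw
  rw [Nat.sub_sub_self i.2.le] at hsym
  simp only [symMap, Fin.val_castSucc, Fin.val_last]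
  rw [esymC_succ_succ, esymC_self, Fin.prod_univ_castSucc, hrev]
  simp only [Fin.init] at hsym ⊢
  linear_combination -z (Fin.last m) * hsym

theorem mem_symTorus_iff_exists_rep_general (m : ℕ) (x : Fin (m + 1) → ℂ) :
    x ∈ symTorus (m + 1) ↔
      ‖x (Fin.last m)‖ = 1 ∧
        ∃ c : Fin m → ℂ, c ∈ symTorus m ∧
          ∀ i : Fin m,
            x i.castSucc = c i + (starRingEnd ℂ) (c i.rev) * x (Fin.last m) := by
  constructor
  · rintro ⟨z, hz, rfl⟩
    refine ⟨?_, symMap m (Fin.init z), ⟨Fin.init z, fun j => hz _, rfl⟩,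
      symMap_succ_castSucc fun j => hz _⟩
    simp [symMap_succ_last, hz]
  · rintro ⟨hp, c, ⟨w, hw, rfl⟩, hx⟩
    set p := x (Fin.last m)
    have hprod : ‖∏ j, w j‖ = 1 := by simp [hw]
    set z : Fin (m + 1) → ℂ := Fin.snoc w (p * starRingEnd ℂ (∏ j, w j))
    have hinit : Fin.init z = w := Fin.init_snoc _ _
    have hlast : symMap (m + 1) z (Fin.last m) = p := by
      rw [symMap_succ_last, Fin.prod_snoc, mul_left_comm, Complex.mul_conj', hprod]
      simp
    refine ⟨z, Fin.forall_fin_succ'.2 ⟨fun i => ?_, ?_⟩, funext <| Fin.lastCases hlast fun i => ?_⟩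
    · simpa [z] using hw i
    · simp [z, hp, hw]
    · rw [symMap_succ_castSucc (hinit ▸ hw), hinit, hlast, hx]

/-- For `n = m + 1 ≥ 2`, the point `(s₁, …, s_{n-1}, p)` (here
`x i.castSucc = s_{i+1}` for `i : Fin m` and `x (Fin.last m) = p`) lies in
`πₙ(𝕋ⁿ)` iff `|p| = 1` and there is `(c₁, …, c_{n-1}) ∈ π_{n-1}(𝕋^{n-1})` with
`sᵢ = cᵢ + conj(c_{n-i}) p` for all `i = 1, …, n-1` (note `c i.rev = c_{n-i}`
when `c i = c_{i+1}`). -/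
theorem mem_symTorus_iff_exists_rep (m : ℕ) (hm : 1 ≤ m) (x : Fin (m + 1) → ℂ) :
    x ∈ symTorus (m + 1) ↔
      ‖x (Fin.last m)‖ = 1 ∧
        ∃ c : Fin m → ℂ, c ∈ symTorus m ∧
          ∀ i : Fin m,
            x i.castSucc = c i + (starRingEnd ℂ) (c i.rev) * x (Fin.last m) :=
  mem_symTorus_iff_exists_rep_general m x
end
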